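/- Let X be a graph and A, B subsets of V(X), and let X(A,B) be the graph obtained from X by adding four new vertices a₁, a₂, b₁, b₂, the edges {a₁,b₁} and {a₂,b₂}, edges from both a₁ and a₂ to every vertex of A, and edges from both b₁ and b₂ to every vertex of B. Then X(A,B) is unstable; moreover, if X is connected, non-bipartite and twin-free, and at least one of A, B is non-empty, then X(A,B) is non-trivially unstable. -/

import Mathlib

open SimpleGraph

/-- The canonical double cover `BX = X × K₂` of a graph `X`:
vertex set `V × Bool`, with `(x,i)` adjacent to `(y,j)` iff `x ~ y` in `X` and `i ≠ j`. -/
def doubleCover {V : Type*} (X : SimpleGraph V) : SimpleGraph (V × Bool) where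
  Adj p q := X.Adj p.1 q.1 ∧ p.2 ≠ q.2
  symm := ⟨fun p q h => ⟨X.symm.symm _ _ h.1, Ne.symm h.2⟩⟩
  loopless := ⟨fun p h => h.2 rfl⟩

/-- An automorphism of `BX` is *expected* if it lies in the subgroup generated by the
lifts of automorphisms of `X` and the coordinate swap `τ`, i.e. it has the form
`(x,i) ↦ (φ x, i + b)` for some automorphism `φ` of `X` and some `b`. -/
def IsExpected {V : Type*} (X : SimpleGraph V) (α : doubleCover X ≃g doubleCover X) : Prop :=
  ∃ (φ : X ≃g X) (b : Bool), ∀ p : V × Bool, α p = (φ p.1, xor p.2 b)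

/-- A graph is *stable* if every automorphism of its canonical double cover is expected. -/
def IsStable {V : Type*} (X : SimpleGraph V) : Prop :=
  ∀ α : doubleCover X ≃g doubleCover X, IsExpected X α

/-- A graph is *twin-free* if distinct vertices have distinct neighbourhoods. -/
def TwinFree {V : Type*} (X : SimpleGraph V) : Prop :=
  ∀ u v : V, X.neighborSet u = X.neighborSet v → u = v

/-- The graph `X(A,B)`: add four new vertices `a₁ = inr 0`, `a₂ = inr 1`,
`b₁ = inr 2`, `b₂ = inr 3` to `X`, with the edges `{a₁,b₁}`, `{a₂,b₂}`,
edges from `a₁` and `a₂` to every vertex of `A`, and edges from `b₁` and `b₂`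
to every vertex of `B`. -/
def extGraph {V : Type*} (X : SimpleGraph V) (A B : Set V) : SimpleGraph (V ⊕ Fin 4) where
  Adj p q :=
    match p, q with
    | Sum.inl u, Sum.inl v => X.Adj u v
    | Sum.inl u, Sum.inr i => ((i = 0 ∨ i = 1) ∧ u ∈ A) ∨ ((i = 2 ∨ i = 3) ∧ u ∈ B)
    | Sum.inr i, Sum.inl u => ((i = 0 ∨ i = 1) ∧ u ∈ A) ∨ ((i = 2 ∨ i = 3) ∧ u ∈ B)
    | Sum.inr i, Sum.inr j =>
        (i = 0 ∧ j = 2) ∨ (i = 2 ∧ j = 0) ∨ (i = 1 ∧ j = 3) ∨ (i = 3 ∧ j = 1)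
  symm := by
    constructor
    rintro (u | i) (v | j) h
    · exact X.symm.symm _ _ h
    · exact h
    · exact h
    · tauto
  loopless := by
    constructor
    rintro (u | i) h
    · exact X.loopless.irrefl u h
    · rcases h with ⟨rfl, h2⟩ | ⟨rfl, h2⟩ | ⟨rfl, h2⟩ | ⟨rfl, h2⟩ <;> exact absurd h2 (by decide)


/-!
A pair of permutations `(σ, τ)` of the vertices of `X` with `σ x ~ τ y ↔ x ~ y` (a two-fold
automorphism) acts on `BX` by `σ` on the layer `false` and by `τ` on the layer `true`. If this
automorphism were expected, `(x, i) ↦ (φ x, i + b)`, comparing first coordinates on both layers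
would give `σ = φ = τ`. In `X(A,B)` the pair `σ = (a₁ a₂)`, `τ = (b₁ b₂)` is two-fold,
because `a₁ ~ b₁` and `a₂ ~ b₂` are the only edges among the new vertices and `a₁, a₂` (resp.
`b₁, b₂`) have the same neighbours in `X`; hence `X(A,B)` is unstable. The other properties are
inherited from `X`: the new vertices hang off a vertex of `A ∪ B`, `X` embeds in `X(A,B)`, and
the new vertices are told apart from each other and from the old ones by their neighbours among
the new vertices.
-/

section TwoFold

variable {V : Type*} (X : SimpleGraph V)

def IsTwoFold (σ τ : V ≃ V) : Prop :=
  ∀ x y, X.Adj (σ x) (τ y) ↔ X.Adj x y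

def twoFoldIso {σ τ : V ≃ V} (h : IsTwoFold X σ τ) : doubleCover X ≃g doubleCover X where
  toEquiv := Equiv.prodCongrLeft fun b => bif b then τ else σ
  map_rel_iff' := by
    rintro ⟨x, _ | _⟩ ⟨y, _ | _⟩ <;>
      simp [doubleCover, h x y, h y x, X.adj_comm (τ x), X.adj_comm x]

variable {X}

theorem eq_of_isExpected_twoFoldIso {σ τ : V ≃ V} {h : IsTwoFold X σ τ}
    (hexp : IsExpected X (twoFoldIso X h)) : σ = τ := by
  obtain ⟨φ, b, hφ⟩ := hexp
  ext x
  obtain ⟨hσ, -⟩ := Prod.ext_iff.mp (hφ (x, false))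
  obtain ⟨hτ, -⟩ := Prod.ext_iff.mp (hφ (x, true))
  exact hσ.trans hτ.symm

theorem not_isStable_of_isTwoFold {σ τ : V ≃ V} (h : IsTwoFold X σ τ) (hne : σ ≠ τ) :
    ¬IsStable X :=
  fun hst => hne (eq_of_isExpected_twoFoldIso (hst (twoFoldIso X h)))

end TwoFold

namespace extGraph

variable {V : Type*} {X : SimpleGraph V} {A B : Set V}

@[simp]
theorem adj_inl_inl {u v : V} : (extGraph X A B).Adj (.inl u) (.inl v) ↔ X.Adj u v := Iff.rfl

@[simp]
theorem adj_inl_inr {u : V} {i : Fin 4} : (extGraph X A B).Adj (.inl u) (.inr i) ↔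
    ((i = 0 ∨ i = 1) ∧ u ∈ A) ∨ ((i = 2 ∨ i = 3) ∧ u ∈ B) := Iff.rfl

@[simp]
theorem adj_inr_inl {u : V} {i : Fin 4} : (extGraph X A B).Adj (.inr i) (.inl u) ↔
    ((i = 0 ∨ i = 1) ∧ u ∈ A) ∨ ((i = 2 ∨ i = 3) ∧ u ∈ B) := Iff.rfl

@[simp]
theorem adj_inr_inr {i j : Fin 4} : (extGraph X A B).Adj (.inr i) (.inr j) ↔
    (i = 0 ∧ j = 2) ∨ (i = 2 ∧ j = 0) ∨ (i = 1 ∧ j = 3) ∨ (i = 3 ∧ j = 1) := Iff.rfl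

theorem adj_inr_add_two (i : Fin 4) : (extGraph X A B).Adj (.inr i) (.inr (i + 2)) := by
  rw [adj_inr_inr]
  revert i
  decide

variable (X A B)

def inlHom : X →g extGraph X A B := ⟨Sum.inl, id⟩

theorem isTwoFold_swap :
    IsTwoFold (extGraph X A B)
      (.sumCongr (.refl V) (.swap 0 1)) (.sumCongr (.refl V) (.swap 2 3)) := by
  rintro (u | i) (v | j)
  · rfl
  · fin_cases j <;> simp [Equiv.swap_apply_of_ne_of_ne, or_comm]
  · fin_cases i <;> simp [Equiv.swap_apply_of_ne_of_ne, or_comm]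
  · simp only [Equiv.sumCongr_apply, Sum.map_inr, adj_inr_inr]
    revert i j
    decide

theorem not_isStable : ¬IsStable (extGraph X A B) := by
  refine not_isStable_of_isTwoFold (isTwoFold_swap X A B) fun h => ?_
  have h0 := Equiv.ext_iff.mp h (.inr 0)
  simp [Equiv.swap_apply_of_ne_of_ne] at h0

variable {X A B}

theorem reachable_inr_of_adj_inr_pair {c : V} {k : Fin 4}
    (hc : ∀ i, i = k ∨ i = k + 1 → (extGraph X A B).Adj (.inl c) (.inr i)) (i : Fin 4) :
    (extGraph X A B).Reachable (.inl c) (.inr i) := by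
  by_cases hi : i = k ∨ i = k + 1
  · exact (hc i hi).reachable
  · refine (hc (i + 2) ?_).reachable.trans (adj_inr_add_two i).symm.reachable
    clear hc
    revert i k
    decide

theorem connected (hX : X.Connected) (hAB : A.Nonempty ∨ B.Nonempty) :
    (extGraph X A B).Connected := by
  obtain ⟨c, k, hc⟩ :
      ∃ c k, ∀ i, i = k ∨ i = k + 1 → (extGraph X A B).Adj (.inl c) (.inr i) := by
    rcases hAB with ⟨a, ha⟩ | ⟨b, hb⟩
    exacts [⟨a, 0, fun i hi => Or.inl ⟨hi, ha⟩⟩, ⟨b, 2, fun i hi => Or.inr ⟨hi, hb⟩⟩]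
  refine (connected_iff_exists_forall_reachable _).mpr ⟨.inl c, ?_⟩
  rintro (v | i)
  exacts [(hX.preconnected c v).map (inlHom X A B), reachable_inr_of_adj_inr_pair hc i]

theorem neighborSet_inl_ne_inr (u : V) (j : Fin 4) :
    (extGraph X A B).neighborSet (.inl u) ≠ (extGraph X A B).neighborSet (.inr j) := by
  intro h
  have hN (k : Fin 4) :
      (extGraph X A B).Adj (.inl u) (.inr k) ↔ (extGraph X A B).Adj (.inr j) (.inr k) :=
    Set.ext_iff.mp h (.inr k)
  have hA :
      (extGraph X A B).Adj (.inl u) (.inr 0) ↔ (extGraph X A B).Adj (.inl u) (.inr 1) := by simp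
  have hB :
      (extGraph X A B).Adj (.inl u) (.inr 2) ↔ (extGraph X A B).Adj (.inl u) (.inr 3) := by simp
  have hj :=
    And.intro ((hN 0).symm.trans (hA.trans (hN 1))) ((hN 2).symm.trans (hB.trans (hN 3)))
  simp only [adj_inr_inr] at hj
  clear hN hA hB h
  revert j
  decide

theorem eq_of_neighborSet_inr_eq {i j : Fin 4}
    (h : (extGraph X A B).neighborSet (.inr i) = (extGraph X A B).neighborSet (.inr j)) :
    i = j := by
  have hj := (Set.ext_iff.mp h (.inr (i + 2))).mp (adj_inr_add_two (X := X) (A := A) (B := B) i)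
  rw [mem_neighborSet, adj_inr_inr] at hj
  clear h
  revert i j
  decide

theorem twinFree (hX : TwinFree X) : TwinFree (extGraph X A B) := by
  rintro (u | i) (v | j) h
  · exact congrArg Sum.inl (hX u v (Set.ext fun w => by simpa using Set.ext_iff.mp h (.inl w)))
  · exact absurd h (neighborSet_inl_ne_inr u j)
  · exact absurd h.symm (neighborSet_inl_ne_inr v i)
  · exact congrArg Sum.inr (eq_of_neighborSet_inr_eq h)

end extGraph

theorem extGraph_unstable_general {V : Type*} (X : SimpleGraph V) (A B : Set V) :
    ¬IsStable (extGraph X A B) ∧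
    (X.Connected → ¬X.Colorable 2 → TwinFree X → (A.Nonempty ∨ B.Nonempty) →
      (extGraph X A B).Connected ∧ ¬(extGraph X A B).Colorable 2 ∧
        TwinFree (extGraph X A B) ∧ ¬IsStable (extGraph X A B)) :=
  ⟨extGraph.not_isStable X A B, fun hconn hbip htf hAB =>
    ⟨extGraph.connected hconn hAB, fun hcol => hbip (hcol.of_hom (extGraph.inlHom X A B)),
      extGraph.twinFree htf, extGraph.not_isStable X A B⟩⟩

theorem extGraph_unstable {V : Type*} [Fintype V] (X : SimpleGraph V) (A B : Set V) :
    ¬IsStable (extGraph X A B) ∧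
    (X.Connected → ¬X.Colorable 2 → TwinFree X → (A.Nonempty ∨ B.Nonempty) →
      (extGraph X A B).Connected ∧ ¬(extGraph X A B).Colorable 2 ∧
        TwinFree (extGraph X A B) ∧ ¬IsStable (extGraph X A B)) :=
  extGraph_unstable_general X A B
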